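/- Let α ≥ 0, A > 0, δ > 0 and let m, k, q ∈ ℕ. Then there exist constants C, δ' > 0 (depending on m, k, α, δ, A but not on q) such that (A+δ)^{m+2q+k+2} · (m+2q+k+2)^{α(m+2q+k+2)} ≤ C · (A²(2e)^{2α} + δ')^q · q^{2αq} for all q ≥ 1. -/
import Mathlib

lemma aux_add_rpow_le (x y : ℝ) (hx : 0 < x) (hy : 0 < y) :
    (x + y) ^ (x + y) ≤ x ^ x * y ^ y * Real.exp (x + y) := by
  have hxy : (0:ℝ) < x + y := by linarith
  have h2 : (x + y) ^ x ≤ x ^ x * Real.exp y := by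
    have hx' : x + y = x * (1 + y / x) := by field_simp
    rw [hx', Real.mul_rpow hx.le (by positivity)]
    have h3 : (1 + y / x) ^ x ≤ (Real.exp (y / x)) ^ x :=
      Real.rpow_le_rpow (by positivity)
        (by linarith [Real.add_one_le_exp (y / x)]) hx.le
    have h4 : (Real.exp (y / x)) ^ x = Real.exp y := by
      rw [← Real.exp_mul, div_mul_cancel₀ _ hx.ne']
    have := h3.trans_eq h4
    exact mul_le_mul_of_nonneg_left this (Real.rpow_nonneg hx.le x)
  have h5 : (x + y) ^ y ≤ y ^ y * Real.exp x := by
    have hy' : x + y = y * (1 + x / y) := by field_simp; ring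
    rw [hy', Real.mul_rpow hy.le (by positivity)]
    have h3 : (1 + x / y) ^ y ≤ (Real.exp (x / y)) ^ y :=
      Real.rpow_le_rpow (by positivity)
        (by linarith [Real.add_one_le_exp (x / y)]) hy.le
    have h4 : (Real.exp (x / y)) ^ y = Real.exp x := by
      rw [← Real.exp_mul, div_mul_cancel₀ _ hy.ne']
    have := h3.trans_eq h4
    exact mul_le_mul_of_nonneg_left this (Real.rpow_nonneg hy.le y)
  calc (x + y) ^ (x + y) = (x + y) ^ x * (x + y) ^ y := by
        rw [← Real.rpow_add hxy]
    _ ≤ (x ^ x * Real.exp y) * (y ^ y * Real.exp x) := by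
        apply mul_le_mul h2 h5 (Real.rpow_nonneg hxy.le y) (by positivity)
    _ = x ^ x * y ^ y * Real.exp (x + y) := by
        rw [Real.exp_add]; ring

theorem stmt_12 (α A δ : ℝ) (hα : 0 ≤ α) (hA : 0 < A) (hδ : 0 < δ) (m k : ℕ) :
    ∃ C > 0, ∃ δ' > 0, ∀ q : ℕ, 1 ≤ q →
      (A + δ) ^ (m + 2 * q + k + 2) *
          ((m + 2 * q + k + 2 : ℕ) : ℝ) ^ (α * (m + 2 * q + k + 2 : ℕ)) ≤
        C * (A ^ 2 * (2 * Real.exp 1) ^ (2 * α) + δ') ^ q * (q : ℝ) ^ (2 * α * q) := by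
  set b : ℝ := (m : ℝ) + k + 2 with hbdef
  have hb : (0:ℝ) < b := by positivity
  have hAδ : (0:ℝ) < A + δ := by linarith
  refine ⟨(A + δ) ^ (m + k + 2) * b ^ (α * b) * Real.exp (α * b), by positivity,
    ((A + δ) ^ 2 - A ^ 2) * (2 * Real.exp 1) ^ (2 * α), ?_, ?_⟩
  · apply mul_pos
    · have : A ^ 2 < (A + δ) ^ 2 := by nlinarith
      linarith
    · exact Real.rpow_pos_of_pos (by positivity) _
  · intro q hq
    have hq1 : (1:ℝ) ≤ (q:ℝ) := by exact_mod_cast hq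
    have hp : (0:ℝ) < 2 * q := by linarith
    have hsum : A ^ 2 * (2 * Real.exp 1) ^ (2 * α) +
        ((A + δ) ^ 2 - A ^ 2) * (2 * Real.exp 1) ^ (2 * α)
        = (A + δ) ^ 2 * (2 * Real.exp 1) ^ (2 * α) := by ring
    rw [hsum]
    have hN : ((m + 2 * q + k + 2 : ℕ) : ℝ) = 2 * q + b := by
      rw [hbdef]; push_cast; ring
    rw [hN]
    have key : (2 * (q:ℝ) + b) ^ (α * (2 * q + b)) ≤
        (2 * q) ^ (α * (2 * q)) * b ^ (α * b) *
          Real.exp (α * (2 * q)) * Real.exp (α * b) := by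
      have h0 : (2 * (q:ℝ) + b) ^ (α * (2 * q + b))
          = ((2 * (q:ℝ) + b) ^ ((2:ℝ) * q + b)) ^ α := by
        rw [mul_comm α, Real.rpow_mul (by positivity)]
      rw [h0]
      calc ((2 * (q:ℝ) + b) ^ ((2:ℝ) * q + b)) ^ α
          ≤ ((2 * (q:ℝ)) ^ ((2:ℝ) * q) * b ^ b * Real.exp (2 * q + b)) ^ α :=
            Real.rpow_le_rpow (Real.rpow_nonneg (by positivity) _)
              (aux_add_rpow_le _ _ hp hb) hα
        _ = (2 * (q:ℝ)) ^ (α * (2 * q)) * b ^ (α * b) *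
              Real.exp (α * (2 * q)) * Real.exp (α * b) := by
            rw [Real.mul_rpow (by positivity) (Real.exp_pos _).le,
              Real.mul_rpow (Real.rpow_nonneg (by positivity) _)
                (Real.rpow_nonneg hb.le _),
              ← Real.rpow_mul hp.le,
              ← Real.rpow_mul hb.le, ← Real.exp_mul]
            conv_rhs => rw [mul_assoc, ← Real.exp_add]
            rw [show (2 * (q:ℝ) + b) * α = α * (2 * (q:ℝ)) + α * b by ring,
              show 2 * (q:ℝ) * α = α * (2 * (q:ℝ)) by ring,
              show b * α = α * b by ring]
    have hle : (A + δ) ^ (m + 2 * q + k + 2) * (2 * (q:ℝ) + b) ^ (α * (2 * q + b)) ≤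
        (A + δ) ^ (m + 2 * q + k + 2) *
          ((2 * q) ^ (α * (2 * q)) * b ^ (α * b) *
            Real.exp (α * (2 * q)) * Real.exp (α * b)) :=
      mul_le_mul_of_nonneg_left key (by positivity)
    refine hle.trans (le_of_eq ?_)
    -- now an identity
    have h2q : (2 * (q:ℝ)) ^ (α * (2 * q)) = (2:ℝ) ^ (α * (2 * q)) * (q:ℝ) ^ (2 * α * q) := by
      rw [Real.mul_rpow (by norm_num) (by positivity)]
      ring_nf
    have hpow1 : (A + δ) ^ (m + 2 * q + k + 2) = (A + δ) ^ (m + k + 2) * ((A + δ) ^ 2) ^ q := by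
      rw [← pow_mul, ← pow_add]
      ring_nf
    have hpow2 : (((2:ℝ) * Real.exp 1) ^ (2 * α)) ^ q
        = (2:ℝ) ^ (α * (2 * q)) * Real.exp (α * (2 * q)) := by
      rw [← Real.rpow_natCast (((2:ℝ) * Real.exp 1) ^ (2 * α)) q,
        ← Real.rpow_mul (by positivity),
        Real.mul_rpow (by norm_num) (Real.exp_pos 1).le,
        Real.exp_one_rpow]
      rw [show (2:ℝ) * α * q = α * (2 * q) by ring]
    rw [hpow1, h2q, mul_pow, hpow2]
    ring
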